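/- arXiv:1806.00262 — 2 statements merged into one kernel-verified Lean document; each statement's English description precedes it below -/
import Mathlib

section
/- The adjoint Lie algebra of M_{1,1}(E^1) does not satisfy the identity [x,y,t,...,t,[u,v]] = 0 (with t repeated m times) for any integer m ≥ 0; in particular, with x = u = t the matrix with 1 in position (1,1) and 0 elsewhere, y the matrix with e_1 in position (1,2) and 0 elsewhere, and v the matrix with e_2 in position (2,1) and 0 elsewhere, the left-normalized bracket [x,y,t^(m),[u,v]] is nonzero. -/
/-- The Grassmann (exterior) algebra over `F` on countably many generators. -/
abbrev GrAlg (F : Type) [Field F] := ExteriorAlgebra F (ℕ →₀ F)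

/-- The `i`-th Grassmann generator `e_i`. -/
noncomputable def gen (F : Type) [Field F] (i : ℕ) : GrAlg F :=
  ExteriorAlgebra.ι F (Finsupp.single i (1 : F))

/-- The submodule of generators (degree-one part). -/
noncomputable def grange (F : Type) [Field F] : Submodule F (GrAlg F) :=
  LinearMap.range (ExteriorAlgebra.ι F : (ℕ →₀ F) →ₗ[F] GrAlg F)

/-- The even part `E^1_0` of the unital Grassmann algebra: span of `1` and
products of even length. -/
noncomputable def evenPart1 (F : Type) [Field F] : Submodule F (GrAlg F) :=
  ⨆ n : ℕ, (grange F) ^ (2 * n)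

/-- The even part `E_0` of the non-unital Grassmann algebra: span of
products of even positive length. -/
noncomputable def evenPart (F : Type) [Field F] : Submodule F (GrAlg F) :=
  ⨆ n : ℕ, (grange F) ^ (2 * (n + 1))

/-- The odd part `E_1`: span of products of odd length. -/
noncomputable def oddPart (F : Type) [Field F] : Submodule F (GrAlg F) :=
  ⨆ n : ℕ, (grange F) ^ (2 * n + 1)

/-- The set of matrices of `M_{1,1}`: diagonal entries in `D`, off-diagonal
entries in the odd part. -/
def M11carrier (F : Type) [Field F] (D : Submodule F (GrAlg F)) :
    Set (Matrix (Fin 2) (Fin 2) (GrAlg F)) :=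
  {A | A 0 0 ∈ D ∧ A 1 1 ∈ D ∧ A 0 1 ∈ oddPart F ∧ A 1 0 ∈ oddPart F}

/-- Left-normalized Lie bracket: `lnb x [a₁,…,aₙ] = [[…[x,a₁],…],aₙ]`. -/
def lnb {L : Type*} [LieRing L] (x : L) (l : List L) : L :=
  l.foldl (fun a b => ⁅a, b⁆) x

attribute [local instance] LieRing.ofAssociativeRing


/-! Under `ad E₁₁`, the matrix unit `E₁₂` is an eigenvector with eigenvalue `1` and `E₂₁` one with
eigenvalue `-1`. Hence `[x,y,t^(m),[u,v]] = ±[y,v]`, whose `(1,1)` entry is `e₁e₂`. That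
`e₁e₂ ≠ 0` is seen by pairing it with the determinant of the coordinate functionals of `e₁, e₂`. -/

namespace ExteriorAlgebra

variable {R M : Type*} [CommRing R] [AddCommGroup M] [Module R M]

theorem ι_mul_ι_ne_zero_of_det_ne_zero (f g : Module.Dual R M) {u v : M}
    (h : f u * g v - g u * f v ≠ 0) : ι R u * ι R v ≠ 0 := by
  intro huv
  have hwedge : exteriorPower.ιMulti R 2 ![u, v] = 0 := by
    ext
    simpa [ιMulti_apply, List.ofFn_succ] using huv
  apply h
  simpa [Matrix.det_fin_two] using
    congrArg (exteriorPower.alternatingMapToDual R M 2 ![f, g]) hwedge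

end ExteriorAlgebra

theorem gen_mul_gen_ne_zero (F : Type) [Field F] {i j : ℕ} (hij : i ≠ j) :
    gen F i * gen F j ≠ 0 :=
  ExteriorAlgebra.ι_mul_ι_ne_zero_of_det_ne_zero (Finsupp.lapply i) (Finsupp.lapply j)
    (by simp [hij, hij.symm])

section LeftNormed

variable {L : Type*} [LieRing L]

theorem lnb_concat (a b : L) (l : List L) : lnb a (l ++ [b]) = ⁅lnb a l, b⁆ := by
  simp [lnb]

theorem lnb_replicate_of_lie_eq_zsmul {a t : L} {c : ℤ} (h : ⁅a, t⁆ = c • a) (m : ℕ) :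
    lnb a (List.replicate m t) = c ^ m • a := by
  induction m with
  | zero => simp [lnb]
  | succ m ih => rw [List.replicate_succ', lnb_concat, ih, zsmul_lie, h, pow_succ, mul_smul]

end LeftNormed

namespace Matrix

variable {n R : Type*} [DecidableEq n] [Fintype n] [Ring R] {i j : n}

theorem lie_single_one_single_row (hij : i ≠ j) (a : R) :
    ⁅single i i (1 : R), single i j a⁆ = single i j a := by
  simp [Ring.lie_def, single_mul_single_same, hij.symm]

theorem lie_single_one_single_col (hij : i ≠ j) (a : R) :
    ⁅single i i (1 : R), single j i a⁆ = -single j i a := by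
  simp [Ring.lie_def, single_mul_single_same, hij]

theorem lie_single_single_apply_self (hij : i ≠ j) (a b : R) :
    ⁅single i j a, single j i b⁆ i i = a * b := by
  simp [Ring.lie_def, hij.symm]

end Matrix

theorem stmt3_general (F : Type) [Field F] (m : ℕ) :
    let x : Matrix (Fin 2) (Fin 2) (GrAlg F) := !![(1 : GrAlg F), 0; 0, 0]
    let y : Matrix (Fin 2) (Fin 2) (GrAlg F) := !![0, gen F 1; 0, 0]
    let v : Matrix (Fin 2) (Fin 2) (GrAlg F) := !![0, 0; gen F 2, 0]
    let t := x
    let u := x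
    ⁅lnb ⁅x, y⁆ (List.replicate m t), ⁅u, v⁆⁆ ≠ 0 := by
  intro x y v t u
  have hx : x = Matrix.single 0 0 1 := by ext i j; fin_cases i <;> fin_cases j <;> rfl
  have hy : y = Matrix.single 0 1 (gen F 1) := by ext i j; fin_cases i <;> fin_cases j <;> rfl
  have hv : v = Matrix.single 1 0 (gen F 2) := by ext i j; fin_cases i <;> fin_cases j <;> rfl
  have hxy : ⁅x, y⁆ = y := by rw [hx, hy, Matrix.lie_single_one_single_row (by decide)]
  have hyt : ⁅y, t⁆ = (-1 : ℤ) • y := by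
    change ⁅y, x⁆ = _
    rw [← lie_skew, hxy, neg_one_zsmul]
  have huv : ⁅u, v⁆ = -v := by
    change ⁅x, v⁆ = _
    rw [hx, hv, Matrix.lie_single_one_single_col (by decide)]
  rw [hxy, lnb_replicate_of_lie_eq_zsmul hyt, huv, zsmul_lie, lie_neg]
  intro hzero
  apply gen_mul_gen_ne_zero F (i := 1) (j := 2) (by decide)
  have h00 := congrFun (congrFun hzero 0) 0
  rw [Matrix.smul_apply, Matrix.neg_apply, Matrix.zero_apply, hy, hv,
    Matrix.lie_single_single_apply_self (by decide)] at h00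
  rcases neg_one_pow_eq_or ℤ m with hsign | hsign <;> simpa [hsign] using h00

/-- `M_{1,1}(E¹)` does not satisfy `[x,y,t^(m),[u,v]] = 0` for any `m ≥ 0`:
with `x = u = t = E₁₁`, `y` the matrix with `e₁` in position (1,2), and `v` the
matrix with `e₂` in position (2,1), the bracket `[x,y,t^(m),[u,v]]` is nonzero. -/
theorem stmt3 (F : Type) [Field F] (hF : ringChar F ≠ 2) (m : ℕ) :
    let x : Matrix (Fin 2) (Fin 2) (GrAlg F) := !![(1 : GrAlg F), 0; 0, 0]
    let y : Matrix (Fin 2) (Fin 2) (GrAlg F) := !![0, gen F 1; 0, 0]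
    let v : Matrix (Fin 2) (Fin 2) (GrAlg F) := !![0, 0; gen F 2, 0]
    let t := x
    let u := x
    ⁅lnb ⁅x, y⁆ (List.replicate m t), ⁅u, v⁆⁆ ≠ 0 :=
  stmt3_general F m
end

section
/- Over a field of characteristic p > 2, the adjoint Lie algebra M_{1,1}(E) does not satisfy the identity [x,y^(p-1),x^(p-1),z_1,...,z_{2k},y] = 0 for any integer k ≥ 0. -/
attribute [local instance 100] LieRing.ofAssociativeRing

/-! In the Grassmann algebra the even part `E¹₀` is central and odd elements anticommute. Hence
bracketing `!![s, e; f, s]` (`s` even, `e`, `f` odd) with any `m ∈ M₁₁(E¹)` gives a matrix of the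
same shape with upper right entry `e * (m 1 1 - m 0 0)`. Take `x = !![0, u; 0, a]`,
`y = !![0, 0; v, b]` and `zᵢ = !![0, 0; 0, cᵢ]`, where `a`, `b` are sums of `p - 1` blocks
`e₂ⱼ e₂ⱼ₊₁`, the `cᵢ` are further blocks and `u`, `v` are two further generators, all indices
distinct. Then `[x, y] = !![u v, u b; v a, u v]`, and the `(0, 0)` entry of the long bracket is
`u b · b^(p-2) a^(p-1) c₁ ⋯ c₂ₖ · v`. Blocks commute and square to zero, so `a^(p-1)` is `(p-1)!`
times the product of the blocks of `a`, and likewise for `b`: the entry is `((p-1)!)²`, a unit in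
characteristic `p`, times a product of distinct generators, which is nonzero. -/

open ExteriorAlgebra

section SquareZeroSum
variable {R : Type*} [Semiring R]

lemma Commute.add_pow_succ_of_mul_self_eq_zero {x y : R} (h : Commute x y) (hy : y * y = 0)
    (n : ℕ) : (x + y) ^ (n + 1) = x ^ (n + 1) + (n + 1) • (x ^ n * y) := by
  induction n with
  | zero => simp
  | succ n ih =>
    rw [pow_succ, ih, add_mul, mul_add, mul_add, smul_mul_assoc, smul_mul_assoc, mul_assoc _ y y,
      hy, mul_zero, smul_zero, add_zero, mul_assoc _ y x, h.symm.eq, ← mul_assoc, ← pow_succ,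
      ← pow_succ, add_assoc, ← succ_nsmul']

variable (b : ℕ → R)

lemma sum_range_pow_eq_zero_of_lt (hcomm : ∀ i j, Commute (b i) (b j))
    (hsq : ∀ i, b i * b i = 0) {n m : ℕ} (hnm : n < m) :
    (∑ j ∈ Finset.range n, b j) ^ m = 0 := by
  induction n generalizing m with
  | zero => simp [zero_pow (by omega : m ≠ 0)]
  | succ n ih =>
    obtain ⟨m, rfl⟩ : ∃ m', m = m' + 1 := ⟨m - 1, by omega⟩
    rw [Finset.sum_range_succ,
      (Commute.sum_left _ _ _ fun i _ => hcomm i n).add_pow_succ_of_mul_self_eq_zero (hsq n),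
      ih (by omega), ih (by omega), zero_mul, smul_zero, add_zero]

lemma sum_range_pow_self (hcomm : ∀ i j, Commute (b i) (b j)) (hsq : ∀ i, b i * b i = 0)
    (n : ℕ) : (∑ j ∈ Finset.range n, b j) ^ n = n.factorial • ((List.range n).map b).prod := by
  induction n with
  | zero => simp
  | succ n ih =>
    rw [Finset.sum_range_succ,
      (Commute.sum_left _ _ _ fun i _ => hcomm i n).add_pow_succ_of_mul_self_eq_zero (hsq n),
      sum_range_pow_eq_zero_of_lt b hcomm hsq (Nat.lt_succ_self n), ih, zero_add, smul_mul_assoc,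
      smul_smul, List.range_succ, List.map_append, List.prod_append, Nat.factorial_succ]
    simp

end SquareZeroSum

lemma Submodule.iSup_pow_mul_iSup_pow_le {R A : Type*} [CommSemiring R] [Semiring A]
    [Algebra R A] (M : Submodule R A) {f g h : ℕ → ℕ} (hfg : ∀ i j, ∃ k, f i + g j = h k) :
    (⨆ i, M ^ f i) * (⨆ j, M ^ g j) ≤ ⨆ k, M ^ h k := by
  rw [Submodule.iSup_mul]
  refine iSup_le fun i => ?_
  rw [Submodule.mul_iSup]
  refine iSup_le fun j => ?_
  obtain ⟨k, hk⟩ := hfg i j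
  rw [← pow_add, hk]
  exact le_iSup (fun k => M ^ h k) k

lemma natCast_factorial_ne_zero {K : Type*} [Field K] {p : ℕ} [CharP K p] (hp : p ≠ 0) {m : ℕ}
    (hm : m < p) : (m.factorial : K) ≠ 0 := by
  rw [Ne, CharP.cast_eq_zero_iff K p, (CharP.char_prime_of_ne_zero K hp).dvd_factorial]
  omega

section Parity
variable {F : Type} [Field F]

lemma ι_mul_ι_swap (w w' : ℕ →₀ F) : ι F w * ι F w' = -(ι F w' * ι F w) :=
  eq_neg_of_add_eq_zero_left (ι_add_mul_swap w w')

lemma mul_ι_of_mem_grange_pow {n : ℕ} {x : GrAlg F} (hx : x ∈ grange F ^ n) (w : ℕ →₀ F) :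
    x * ι F w = (-1 : ℤ) ^ n • (ι F w * x) := by
  induction hx using Submodule.pow_induction_on_left' with
  | algebraMap r => simp [Algebra.commutes]
  | add x y i _ _ hx hy => simp only [add_mul, mul_add, hx, hy, smul_add]
  | mem_mul m hm i x _ ih =>
    obtain ⟨w', rfl⟩ := hm
    rw [mul_assoc, ih, mul_smul_comm, ← mul_assoc, ι_mul_ι_swap, pow_succ]
    simp [mul_assoc]

lemma mul_comm_of_mem_grange_pow {m n : ℕ} {x y : GrAlg F} (hx : x ∈ grange F ^ m)
    (hy : y ∈ grange F ^ n) : x * y = (-1 : ℤ) ^ (m * n) • (y * x) := by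
  induction hy using Submodule.pow_induction_on_left' with
  | algebraMap r => simp [Algebra.commutes]
  | add y y' i _ _ hy hy' => simp only [add_mul, mul_add, hy, hy', smul_add]
  | mem_mul v hv i y _ ih =>
    obtain ⟨w, rfl⟩ := hv
    rw [← mul_assoc, mul_ι_of_mem_grange_pow hx, smul_mul_assoc, mul_assoc, ih, mul_smul_comm,
      Nat.succ_eq_add_one, mul_add, mul_one, pow_add, mul_comm ((-1 : ℤ) ^ (m * i)), ← smul_smul]
    simp [mul_assoc]

lemma commute_of_mem_evenPart1 {x : GrAlg F} (hx : x ∈ evenPart1 F) (y : GrAlg F) :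
    Commute x y := by
  have hι : ∀ w, Commute x (ι F w) := by
    intro w
    induction hx using Submodule.iSup_induction' with
    | mem i x hx => simp [Commute, SemiconjBy, mul_ι_of_mem_grange_pow hx, pow_mul]
    | zero => exact Commute.zero_left _
    | add x x' _ _ hx hx' => exact hx.add_left hx'
  induction y using ExteriorAlgebra.induction with
  | algebraMap r => exact (Algebra.commutes r x).symm
  | ι w => exact hι w
  | mul y y' hy hy' => exact hy.mul_right hy'
  | add y y' hy hy' => exact hy.add_right hy'

lemma mul_eq_neg_of_mem_oddPart {x y : GrAlg F} (hx : x ∈ oddPart F) (hy : y ∈ oddPart F) :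
    x * y = -(y * x) := by
  induction hx using Submodule.iSup_induction' with
  | zero => simp
  | add x x' _ _ hx hx' => rw [add_mul, mul_add, hx, hx', neg_add]
  | mem i x hx =>
    induction hy using Submodule.iSup_induction' with
    | zero => simp
    | add y y' _ _ hy hy' => rw [add_mul, mul_add, hy, hy', neg_add]
    | mem j y hy =>
      have hodd : Odd ((2 * i + 1) * (2 * j + 1)) :=
        Nat.odd_mul.mpr ⟨odd_two_mul_add_one i, odd_two_mul_add_one j⟩
      rw [mul_comm_of_mem_grange_pow hx hy, hodd.neg_one_pow, neg_one_smul]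

lemma mul_mem_evenPart1 {x y : GrAlg F} (hx : x ∈ oddPart F) (hy : y ∈ oddPart F) :
    x * y ∈ evenPart1 F :=
  (grange F).iSup_pow_mul_iSup_pow_le (fun i j => ⟨i + j + 1, by ring⟩)
    (Submodule.mul_mem_mul hx hy)

lemma mul_mem_oddPart {x y : GrAlg F} (hx : x ∈ oddPart F) (hy : y ∈ evenPart1 F) :
    x * y ∈ oddPart F :=
  (grange F).iSup_pow_mul_iSup_pow_le (fun i j => ⟨i + j, by ring⟩)
    (Submodule.mul_mem_mul hx hy)

lemma evenPart_le_evenPart1 : evenPart F ≤ evenPart1 F :=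
  iSup_le fun n => le_iSup (fun n => grange F ^ (2 * n)) (n + 1)

lemma M11carrier_mono {D D' : Submodule F (GrAlg F)} (h : D ≤ D') :
    M11carrier F D ⊆ M11carrier F D' :=
  fun _ ⟨h₀₀, h₁₁, h₀₁, h₁₀⟩ => ⟨h h₀₀, h h₁₁, h₀₁, h₁₀⟩

end Parity

section Generators
variable {F : Type} [Field F]

lemma gen_mem_grange (i : ℕ) : gen F i ∈ grange F := ⟨_, rfl⟩

lemma gen_mem_oddPart (i : ℕ) : gen F i ∈ oddPart F :=
  le_iSup (fun n => grange F ^ (2 * n + 1)) 0 (by simpa using gen_mem_grange i)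

lemma gen_mul_self (i : ℕ) : gen F i * gen F i = 0 :=
  ι_sq_zero _

variable (F) in
lemma prod_gen_range_ne_zero (n : ℕ) : ((List.range n).map (gen F)).prod ≠ 0 := by
  let v : Fin n → (ℕ →₀ F) := fun i => Finsupp.single i 1
  have hprod : ((List.range n).map (gen F)).prod = ιMulti F n v := by
    rw [ιMulti_apply, ← List.map_coe_finRange_eq_range, List.map_map, List.ofFn_eq_map]
    rfl
  -- the determinant of the first `n` coordinates detects `e₀ ⋯ eₙ₋₁`
  let ψ : (ℕ →₀ F) [⋀^Fin n]→ₗ[F] F :=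
    Matrix.detRowAlternating.compLinearMap (LinearMap.pi fun i : Fin n => Finsupp.lapply (i : ℕ))
  have hψ : ψ v = 1 := by
    rw [← Matrix.det_one (n := Fin n) (R := F)]
    show Matrix.det _ = _
    congr
    ext i j
    simp [v, Matrix.one_apply, Finsupp.single_apply, Fin.val_eq_val]
  intro h0
  have := congrArg (liftAlternating (Function.update 0 n ψ)) (hprod ▸ h0)
  simp [liftAlternating_apply_ιMulti, hψ] at this

end Generators

section Blocks
variable (F : Type) [Field F]

noncomputable def block (j : ℕ) : GrAlg F := gen F (2 * j) * gen F (2 * j + 1)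

noncomputable def blockSum (o n : ℕ) : GrAlg F := ∑ j ∈ Finset.range n, block F (o + j)

variable {F}

lemma block_mem_evenPart (j : ℕ) : block F j ∈ evenPart F := by
  refine le_iSup (fun n => grange F ^ (2 * (n + 1))) 0 ?_
  rw [zero_add, mul_one, pow_two]
  exact Submodule.mul_mem_mul (gen_mem_grange _) (gen_mem_grange _)

lemma blockSum_mem_evenPart (o n : ℕ) : blockSum F o n ∈ evenPart F :=
  Submodule.sum_mem _ fun j _ => block_mem_evenPart (o + j)

lemma block_commute (i : ℕ) (x : GrAlg F) : Commute (block F i) x :=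
  commute_of_mem_evenPart1 (evenPart_le_evenPart1 (block_mem_evenPart i)) x

lemma block_mul_self (j : ℕ) : block F j * block F j = 0 := by
  nth_rewrite 1 [block]
  rw [mul_assoc, ← (block_commute j _).eq, block, mul_assoc, gen_mul_self, mul_zero, mul_zero]

lemma blockSum_pow_self (o n : ℕ) :
    blockSum F o n ^ n = n.factorial • ((List.range n).map fun j => block F (o + j)).prod :=
  sum_range_pow_self _ (fun _ _ => block_commute _ _) (fun _ => block_mul_self _) n

lemma prod_block_range (n : ℕ) :
    ((List.range n).map (block F)).prod = ((List.range (2 * n)).map (gen F)).prod := by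
  induction n with
  | zero => simp
  | succ n ih =>
    rw [List.range_succ, List.map_append, List.prod_append, ih, Nat.mul_succ, List.range_succ,
      List.range_succ]
    simp [block]

lemma prod_block_range_ne_zero (n : ℕ) : ((List.range n).map (block F)).prod ≠ 0 := by
  rw [prod_block_range]
  exact prod_gen_range_ne_zero F _

lemma ofFn_block (o r : ℕ) :
    List.ofFn (fun i : Fin r => block F (o + i)) = (List.range r).map fun j => block F (o + j) := by
  rw [List.ofFn_eq_map, ← List.map_coe_finRange_eq_range, List.map_map]
  rfl

lemma gen_mul_blockSum_pow_mul_gen (m r : ℕ) :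
    gen F (2 * (m + m + r)) * (blockSum F 0 m ^ m * (blockSum F m m ^ m *
        (List.ofFn fun i : Fin r => block F (m + m + i)).prod)) * gen F (2 * (m + m + r) + 1) =
      (m.factorial * m.factorial) • ((List.range (m + m + r + 1)).map (block F)).prod := by
  have hcomm : Commute (blockSum F 0 m ^ m * (blockSum F m m ^ m *
      (List.ofFn fun i : Fin r => block F (m + m + i)).prod)) (gen F (2 * (m + m + r))) := by
    refine ((commute_of_mem_evenPart1 ?_ _).pow_left m).mul_left
      (((commute_of_mem_evenPart1 ?_ _).pow_left m).mul_left
        (Commute.list_prod_left _ _ fun x hx => ?_))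
    · exact evenPart_le_evenPart1 (blockSum_mem_evenPart 0 m)
    · exact evenPart_le_evenPart1 (blockSum_mem_evenPart m m)
    · obtain ⟨i, rfl⟩ := List.mem_ofFn.mp hx
      exact block_commute _ _
  rw [← hcomm.eq, mul_assoc, ← block, blockSum_pow_self, blockSum_pow_self, ofFn_block]
  simp only [smul_mul_assoc, mul_smul_comm, smul_smul, List.range_succ, List.range_add,
    List.map_append, List.prod_append, List.map_map, List.map_cons, List.map_nil, List.prod_cons,
    List.prod_nil, mul_one, mul_assoc, zero_add, Function.comp_def]

end Blocks

section LeftNormedBracket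
variable {L : Type*} [LieRing L]

lemma lnb_cons (x c : L) (l : List L) : lnb x (c :: l) = lnb ⁅x, c⁆ l := rfl

lemma lnb_append (x : L) (l₁ l₂ : List L) : lnb x (l₁ ++ l₂) = lnb (lnb x l₁) l₂ :=
  List.foldl_append

end LeftNormedBracket

def equalDiag {R : Type*} (s e f : R) : Matrix (Fin 2) (Fin 2) R := !![s, e; f, s]

section Brackets
variable {F : Type} [Field F]

lemma lie_equalDiag {s e f : GrAlg F} (hs : s ∈ evenPart1 F) (he : e ∈ oddPart F)
    (hf : f ∈ oddPart F) {m : Matrix (Fin 2) (Fin 2) (GrAlg F)}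
    (hm : m ∈ M11carrier F (evenPart1 F)) :
    ⁅equalDiag s e f, m⁆ =
      equalDiag (e * m 1 0 - m 0 1 * f) (e * (m 1 1 - m 0 0)) (f * (m 0 0 - m 1 1)) := by
  obtain ⟨ha, hd, hu, hv⟩ := hm
  have hs' := commute_of_mem_evenPart1 hs
  rw [Matrix.eta_fin_two m]
  ext i j
  fin_cases i <;> fin_cases j <;> simp [Ring.lie_def, equalDiag] <;> rw [(hs' _).eq]
  · abel
  · rw [(commute_of_mem_evenPart1 ha e).eq, mul_sub]; abel
  · rw [(commute_of_mem_evenPart1 hd f).eq, mul_sub]; abel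
  · rw [mul_eq_neg_of_mem_oddPart hf hu, mul_eq_neg_of_mem_oddPart hv he]; abel

lemma lnb_equalDiag {s e f : GrAlg F} (hs : s ∈ evenPart1 F) (he : e ∈ oddPart F)
    (hf : f ∈ oddPart F) {l : List (Matrix (Fin 2) (Fin 2) (GrAlg F))}
    (hl : ∀ m ∈ l, m ∈ M11carrier F (evenPart1 F)) :
    ∃ s' ∈ evenPart1 F, ∃ f' ∈ oddPart F,
      lnb (equalDiag s e f) l = equalDiag s' (e * (l.map fun m => m 1 1 - m 0 0).prod) f' := by
  induction l generalizing s e f with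
  | nil => exact ⟨s, hs, f, hf, by simp [lnb]⟩
  | cons m l ih =>
    have hm := hl m List.mem_cons_self
    have ⟨ha, hd, hu, hv⟩ := hm
    rw [lnb_cons, lie_equalDiag hs he hf hm]
    obtain ⟨s', hs', f', hf', h⟩ := ih
      (sub_mem (mul_mem_evenPart1 he hv) (mul_mem_evenPart1 hu hf))
      (mul_mem_oddPart he (sub_mem hd ha)) (mul_mem_oddPart hf (sub_mem ha hd))
      (fun m hm => hl m (List.mem_cons_of_mem _ hm))
    exact ⟨s', hs', f', hf', by rw [h, List.map_cons, List.prod_cons, mul_assoc]⟩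

lemma lie_zeroCol_zeroRow {a b u v : GrAlg F} (ha : a ∈ evenPart1 F) (hu : u ∈ oddPart F)
    (hv : v ∈ oddPart F) :
    ⁅!![0, u; 0, a], !![0, 0; v, b]⁆ = equalDiag (u * v) (u * b) (v * a) := by
  ext i j
  fin_cases i <;> fin_cases j <;> simp [Ring.lie_def, equalDiag]
  · exact (commute_of_mem_evenPart1 ha v).eq
  · rw [(commute_of_mem_evenPart1 ha b).eq, mul_eq_neg_of_mem_oddPart hv hu]
    abel

lemma lnb_zeroCol_zeroRow_apply_zero_zero {a b u v : GrAlg F} (ha : a ∈ evenPart1 F)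
    (hb : b ∈ evenPart1 F) (hu : u ∈ oddPart F) (hv : v ∈ oddPart F)
    {l : List (Matrix (Fin 2) (Fin 2) (GrAlg F))}
    (hl : ∀ m ∈ l, m ∈ M11carrier F (evenPart1 F)) :
    lnb !![0, u; 0, a] (!![0, 0; v, b] :: l ++ [!![0, 0; v, b]]) 0 0 =
      u * b * (l.map fun m => m 1 1 - m 0 0).prod * v := by
  obtain ⟨s', -, f', -, h⟩ := lnb_equalDiag (mul_mem_evenPart1 hu hv) (mul_mem_oddPart hu hb)
    (mul_mem_oddPart hv ha) hl
  rw [lnb_append, lnb_cons _ _ l, lie_zeroCol_zeroRow ha hu hv, h]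
  simp [lnb, Ring.lie_def, equalDiag]

end Brackets

section Witnesses
variable (F : Type) [Field F]

-- The indices are chosen so that the final `(0, 0)` entry is `(m!)² • e₀ e₁ ⋯ e_{2(2m+r)+1}`.
noncomputable def witnessX (m r : ℕ) : Matrix (Fin 2) (Fin 2) (GrAlg F) :=
  !![0, gen F (2 * (m + m + r)); 0, blockSum F m m]

noncomputable def witnessY (m r : ℕ) : Matrix (Fin 2) (Fin 2) (GrAlg F) :=
  !![0, 0; gen F (2 * (m + m + r) + 1), blockSum F 0 m]

noncomputable def witnessZ (m i : ℕ) : Matrix (Fin 2) (Fin 2) (GrAlg F) :=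
  !![0, 0; 0, block F (m + m + i)]

variable {F}

lemma witnessX_mem (m r : ℕ) : witnessX F m r ∈ M11carrier F (evenPart F) :=
  ⟨zero_mem _, by simpa [witnessX] using blockSum_mem_evenPart m m,
    by simpa [witnessX] using gen_mem_oddPart _, by simp [witnessX]⟩

lemma witnessY_mem (m r : ℕ) : witnessY F m r ∈ M11carrier F (evenPart F) :=
  ⟨zero_mem _, by simpa [witnessY] using blockSum_mem_evenPart 0 m, by simp [witnessY],
    by simpa [witnessY] using gen_mem_oddPart _⟩

lemma witnessZ_mem (m i : ℕ) : witnessZ F m i ∈ M11carrier F (evenPart F) :=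
  ⟨zero_mem _, by simpa [witnessZ] using block_mem_evenPart _, by simp [witnessZ],
    by simp [witnessZ]⟩

lemma lnb_witness_apply_zero_zero {m : ℕ} (hm : 0 < m) (r : ℕ) :
    lnb (witnessX F m r) (List.replicate m (witnessY F m r) ++ List.replicate m (witnessX F m r) ++
      List.ofFn (fun i : Fin r => witnessZ F m i) ++ [witnessY F m r]) 0 0 =
      (m.factorial * m.factorial) • ((List.range (m + m + r + 1)).map (block F)).prod := by
  obtain ⟨n, rfl⟩ : ∃ n, m = n + 1 := ⟨m - 1, by omega⟩
  have hl : ∀ A ∈ List.replicate n (witnessY F (n + 1) r) ++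
      List.replicate (n + 1) (witnessX F (n + 1) r) ++
      List.ofFn (fun i : Fin r => witnessZ F (n + 1) i), A ∈ M11carrier F (evenPart1 F) := by
    intro A hA
    apply M11carrier_mono evenPart_le_evenPart1
    simp only [List.mem_append, List.mem_replicate, List.mem_ofFn] at hA
    rcases hA with (⟨-, rfl⟩ | ⟨-, rfl⟩) | ⟨i, rfl⟩
    · exact witnessY_mem _ _
    · exact witnessX_mem _ _
    · exact witnessZ_mem _ _
  rw [List.replicate_succ, List.cons_append, List.cons_append]
  refine (lnb_zeroCol_zeroRow_apply_zero_zero (evenPart_le_evenPart1 (blockSum_mem_evenPart _ _))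
    (evenPart_le_evenPart1 (blockSum_mem_evenPart _ _)) (gen_mem_oddPart _) (gen_mem_oddPart _)
    hl).trans ?_
  rw [← gen_mul_blockSum_pow_mul_gen]
  simp [witnessX, witnessY, witnessZ, pow_succ', mul_assoc, Function.comp_def]

end Witnesses

/-- Over a field of characteristic `p > 2`, the adjoint Lie algebra
`M_{1,1}(E)` does not satisfy `[x,y^(p-1),x^(p-1),z₁,…,z_{2k},y] = 0` for any
integer `k ≥ 0`. -/
theorem stmt15 (F : Type) [Field F] (p : ℕ) (hp : 2 < p) [CharP F p] (k : ℕ) :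
    ∃ x ∈ M11carrier F (evenPart F), ∃ y ∈ M11carrier F (evenPart F),
      ∃ z : Fin (2 * k) → Matrix (Fin 2) (Fin 2) (GrAlg F),
        (∀ i, z i ∈ M11carrier F (evenPart F)) ∧
        lnb x (List.replicate (p - 1) y ++ List.replicate (p - 1) x ++
          List.ofFn z ++ [y]) ≠ 0 := by
  refine ⟨witnessX F (p - 1) (2 * k), witnessX_mem _ _, witnessY F (p - 1) (2 * k),
    witnessY_mem _ _, fun i => witnessZ F (p - 1) i, fun i => witnessZ_mem _ _, fun h0 => ?_⟩
  have h := congrFun (congrFun h0 0) 0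
  rw [lnb_witness_apply_zero_zero (by omega), Matrix.zero_apply, ← Nat.cast_smul_eq_nsmul F,
    smul_eq_zero, Nat.cast_mul, mul_self_eq_zero] at h
  rcases h with h | h
  · exact natCast_factorial_ne_zero (by omega) (by omega : p - 1 < p) h
  · exact prod_block_range_ne_zero _ h
end
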